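/- Let E be a finite-dimensional real inner product space and K ≥ 1. Let z : E → EuclideanSpace ℝ (Fin K) be differentiable at θ with operator norm ‖Dz(θ)‖ ≤ M, let q be a probability vector on Fin K, and define ℓ(ψ) = CE(q‖softmax(z(ψ))). Then ℓ is differentiable at θ and ‖∇ℓ(θ)‖ ≤ M·√(2·ℓ(θ)). -/

import Mathlib

/-!
Since `∑ qᵢ = 1`, the loss is `ℓ = log ∑ⱼ exp zⱼ - ∑ᵢ qᵢ zᵢ`, whose gradient in the logits is
`p - q` with `p = softmax z`; by the chain rule `‖∇ℓ(θ)‖ ≤ ‖p - q‖ · M`. For probability vectors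
`pᵢ² ≤ pᵢ` and `qᵢ² ≤ qᵢ`, so `‖p - q‖² ≤ 2 (1 - ∑ᵢ qᵢ pᵢ) = 2 ∑ᵢ qᵢ (1 - pᵢ)`, and
`1 - pᵢ ≤ -log pᵢ` bounds this by `2 CE(q‖p)`.
-/

/-- `softmax(z)_i = exp(z_i) / ∑_j exp(z_j)`. -/
noncomputable def softmax {K : ℕ} (z : EuclideanSpace ℝ (Fin K)) : Fin K → ℝ :=
  fun i => Real.exp (z i) / ∑ j, Real.exp (z j)

/-- Cross-entropy `CE(q‖p) = −∑_i q_i·log p_i`. -/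
noncomputable def crossEntropy {K : ℕ} (q p : Fin K → ℝ) : ℝ :=
  -∑ i, q i * Real.log (p i)

open InnerProductSpace

lemma sum_sq_sub_le_two_mul_crossEntropy {K : ℕ} {p q : Fin K → ℝ} (hp0 : ∀ i, 0 < p i)
    (hp1 : ∑ i, p i = 1) (hq0 : ∀ i, 0 ≤ q i) (hq1 : ∑ i, q i = 1) :
    ∑ i, (p i - q i) ^ 2 ≤ 2 * crossEntropy q p := by
  have le_one {r : Fin K → ℝ} (hr0 : ∀ i, 0 ≤ r i) (hr1 : ∑ i, r i = 1) (i : Fin K) : r i ≤ 1 :=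
    hr1 ▸ Finset.single_le_sum (fun j _ => hr0 j) (Finset.mem_univ i)
  calc ∑ i, (p i - q i) ^ 2
      ≤ ∑ i, (p i + q i - 2 * (p i * q i)) := Finset.sum_le_sum fun i _ => by
        nlinarith [hp0 i, le_one (fun j => (hp0 j).le) hp1 i, hq0 i, le_one hq0 hq1 i]
    _ = 2 * ∑ i, q i * (1 - p i) := by
        simp only [Finset.sum_sub_distrib, Finset.sum_add_distrib, mul_sub, mul_one,
          ← Finset.mul_sum, hp1, hq1]
        simp only [mul_comm (p _)]
        ring
    _ ≤ 2 * crossEntropy q p := by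
        rw [crossEntropy, ← Finset.sum_neg_distrib]
        gcongr with i hi
        rw [← mul_neg]
        exact mul_le_mul_of_nonneg_left (by linarith [Real.log_le_sub_one_of_pos (hp0 i)]) (hq0 i)

section Softmax

variable {K : ℕ} [Nonempty (Fin K)]

lemma sum_exp_pos (x : EuclideanSpace ℝ (Fin K)) : 0 < ∑ j, Real.exp (x j) :=
  Finset.sum_pos (fun _ _ => Real.exp_pos _) Finset.univ_nonempty

lemma softmax_pos (x : EuclideanSpace ℝ (Fin K)) (i : Fin K) : 0 < softmax x i :=
  div_pos (Real.exp_pos _) (sum_exp_pos x)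

lemma sum_softmax (x : EuclideanSpace ℝ (Fin K)) : ∑ i, softmax x i = 1 := by
  simp only [softmax, ← Finset.sum_div, div_self (sum_exp_pos x).ne']

lemma crossEntropy_softmax {q : Fin K → ℝ} (hq1 : ∑ i, q i = 1) (x : EuclideanSpace ℝ (Fin K)) :
    crossEntropy q (softmax x) = Real.log (∑ j, Real.exp (x j)) - ∑ i, q i * x i := by
  simp only [crossEntropy, softmax, Real.log_div (Real.exp_ne_zero _) (sum_exp_pos x).ne',
    Real.log_exp, mul_sub, Finset.sum_sub_distrib, ← Finset.sum_mul, hq1]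
  ring

lemma hasGradientAt_crossEntropy_softmax {q : Fin K → ℝ} (hq1 : ∑ i, q i = 1)
    (x : EuclideanSpace ℝ (Fin K)) :
    HasGradientAt (fun y => crossEntropy q (softmax y)) (WithLp.toLp 2 (softmax x - q)) x := by
  have hproj (i : Fin K) := PiLp.hasFDerivAt_apply (𝕜 := ℝ) 2 x i
  have hlse := (HasFDerivAt.fun_sum fun j _ => (hproj j).exp).log (sum_exp_pos x).ne'
  have hlin := HasFDerivAt.fun_sum fun i (_ : i ∈ Finset.univ) => (hproj i).const_mul (q i)
  rw [hasGradientAt_iff_hasFDerivAt, funext (crossEntropy_softmax hq1)]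
  refine (hlse.sub hlin).congr_fderiv ?_
  ext v
  simp only [sub_apply, smul_apply, sum_apply, PiLp.proj_apply, smul_eq_mul, Finset.mul_sum,
    WithLp.toLp_sub, map_sub, toDual_apply_apply, PiLp.inner_apply, softmax, RCLike.inner_apply,
    conj_trivial]
  congr 1 <;> exact Finset.sum_congr rfl fun i _ => by ring

end Softmax

lemma HasGradientAt.norm_gradient_comp_le {E F : Type*} [NormedAddCommGroup E]
    [InnerProductSpace ℝ E] [CompleteSpace E] [NormedAddCommGroup F] [InnerProductSpace ℝ F]
    [CompleteSpace F] {f : F → ℝ} {g : F} {z : E → F} {θ : E} (hf : HasGradientAt f g (z θ))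
    (hz : DifferentiableAt ℝ z θ) : ‖_root_.gradient (f ∘ z) θ‖ ≤ ‖g‖ * ‖fderiv ℝ z θ‖ := by
  have hcomp := hf.hasFDerivAt.comp θ hz.hasFDerivAt
  rw [_root_.gradient, hcomp.fderiv, LinearIsometryEquiv.norm_map, ← (toDual ℝ F).norm_map g]
  exact ContinuousLinearMap.opNorm_comp_le _ _

lemma norm_sub_le_sqrt_two_mul_crossEntropy {K : ℕ} {p q : Fin K → ℝ} (hp0 : ∀ i, 0 < p i)
    (hp1 : ∑ i, p i = 1) (hq0 : ∀ i, 0 ≤ q i) (hq1 : ∑ i, q i = 1) :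
    ‖WithLp.toLp 2 (p - q)‖ ≤ Real.sqrt (2 * crossEntropy q p) := by
  rw [EuclideanSpace.norm_eq]
  gcongr
  simpa using sum_sq_sub_le_two_mul_crossEntropy hp0 hp1 hq0 hq1

theorem softmax_crossEntropy_gradient_bound_general
    {E : Type*} [NormedAddCommGroup E] [InnerProductSpace ℝ E] [FiniteDimensional ℝ E]
    {K : ℕ}
    (z : E → EuclideanSpace ℝ (Fin K)) (θ : E) (M : ℝ)
    (hz : DifferentiableAt ℝ z θ) (hDz : ‖fderiv ℝ z θ‖ ≤ M)
    (q : Fin K → ℝ) (hq0 : ∀ i, 0 ≤ q i) (hq1 : ∑ i, q i = 1)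
    (ℓ : E → ℝ) (hℓ : ℓ = fun ψ => crossEntropy q (softmax (z ψ))) :
    DifferentiableAt ℝ ℓ θ ∧
      ‖gradient ℓ θ‖ ≤ M * Real.sqrt (2 * ℓ θ) := by
  have : Nonempty (Fin K) := by
    by_contra hK
    simp [not_nonempty_iff.mp hK] at hq1
  have hgrad := hasGradientAt_crossEntropy_softmax hq1 (z θ)
  subst hℓ
  refine ⟨hgrad.differentiableAt.comp θ hz, (hgrad.norm_gradient_comp_le hz).trans ?_⟩
  rw [mul_comm M]
  exact mul_le_mul (norm_sub_le_sqrt_two_mul_crossEntropy (softmax_pos _) (sum_softmax _) hq0 hq1)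
    hDz (norm_nonneg _) (Real.sqrt_nonneg _)

/-- **Step-3 gradient bound.** The softmax cross-entropy loss
`ℓ(ψ) = CE(q ‖ softmax(z(ψ)))` is differentiable at `θ` and its gradient norm is
bounded by `M·√(2·ℓ(θ))`, where `M` bounds the operator norm of the logit Jacobian. -/
theorem softmax_crossEntropy_gradient_bound
    {E : Type*} [NormedAddCommGroup E] [InnerProductSpace ℝ E] [FiniteDimensional ℝ E]
    {K : ℕ} (hK : 1 ≤ K)
    (z : E → EuclideanSpace ℝ (Fin K)) (θ : E) (M : ℝ) (hM : 0 ≤ M)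
    (hz : DifferentiableAt ℝ z θ) (hDz : ‖fderiv ℝ z θ‖ ≤ M)
    (q : Fin K → ℝ) (hq0 : ∀ i, 0 ≤ q i) (hq1 : ∑ i, q i = 1)
    (ℓ : E → ℝ) (hℓ : ℓ = fun ψ => crossEntropy q (softmax (z ψ))) :
    DifferentiableAt ℝ ℓ θ ∧
      ‖gradient ℓ θ‖ ≤ M * Real.sqrt (2 * ℓ θ) :=
  softmax_crossEntropy_gradient_bound_general z θ M hz hDz q hq0 hq1 ℓ hℓ
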